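/- Expectation consistency of the utility-based acceptability index: if E[X] < 0 then α(X) = 0, and if E[X] > 0 then α(X) > 0, for X ∈ L^∞. -/

import Mathlib

open MeasureTheory ENNReal

/-- `μ_γ(X) = -(1/γ) U⁻¹(E[U(γX)])`. -/
noncomputable def mu {Ω : Type*} [MeasurableSpace Ω] (P : Measure Ω)
    (U : ℝ → ℝ) (γ : ℝ) (X : Ω → ℝ) : ℝ :=
  -(1 / γ) * Function.invFun U (∫ ω, U (γ * X ω) ∂P)

/-- Utility-based acceptability index `α(X) = sup {γ > 0 : μ_γ(X) ≤ 0}`,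
with values in `[0, ∞]` and `sup ∅ = 0`. -/
noncomputable def alpha {Ω : Type*} [MeasurableSpace Ω] (P : Measure Ω)
    (U : ℝ → ℝ) (X : Ω → ℝ) : ℝ≥0∞ :=
  ⨆ γ ∈ {γ : ℝ | 0 < γ ∧ mu P U γ X ≤ 0}, ENNReal.ofReal γ

/-!
For `γ > 0`, the sign of `μ_γ(X)` is that of `U 0 - E[U(γX)]`: `E[U(γX)]` lies in the range of
the continuous, strictly increasing `U` (as `X` is bounded), where `Function.invFun U` is a genuine
inverse. If `E[X] < 0`, Jensen's inequality gives `E[U(γX)] ≤ U(γE[X]) < U 0` for every `γ > 0`.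
If `E[X] > 0`, the first-order expansion of `U` at `0`, uniform on the bounded range of `γX`, gives
`E[U(γX)] ≥ U 0 + γ(U'(0)E[X] - ε‖X‖_∞) ≥ U 0` for small `γ`, since `U'(0) > 0` for a concave,
strictly increasing `U`.
-/

open Set Filter

lemma ConcaveOn.pos_of_hasDerivAt_of_strictMono {U : ℝ → ℝ} {d x : ℝ}
    (hconc : ConcaveOn ℝ univ U) (hmono : StrictMono U) (hd : HasDerivAt U d x) : 0 < d :=
  ((slope_pos_iff (lt_add_one x)).2 (hmono (lt_add_one x))).trans_le
    (hconc.slope_le_of_hasDerivAt (mem_univ _) (mem_univ _) (lt_add_one x) hd)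

section

variable {Ω : Type*} [MeasurableSpace Ω] {P : Measure Ω} {U : ℝ → ℝ} {X Y : Ω → ℝ} {M : ℝ}

lemma integrable_comp_of_ae_abs_le [IsFiniteMeasure P] (hU : Continuous U) (hmono : Monotone U)
    (hY : AEStronglyMeasurable Y P) (hYM : ∀ᵐ ω ∂P, |Y ω| ≤ M) :
    Integrable (fun ω => U (Y ω)) P := by
  refine .of_bound (hU.comp_aestronglyMeasurable hY) (max |U (-M)| |U M|) ?_
  filter_upwards [hYM] with ω hω
  exact abs_le_max_abs_abs (hmono (abs_le.1 hω).1) (hmono (abs_le.1 hω).2)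

lemma integral_comp_mem_range [IsProbabilityMeasure P] (hU : Continuous U) (hmono : Monotone U)
    (hY : AEStronglyMeasurable Y P) (hYM : ∀ᵐ ω ∂P, |Y ω| ≤ M) :
    ∫ ω, U (Y ω) ∂P ∈ range U := by
  have hint := integrable_comp_of_ae_abs_le hU hmono hY hYM
  refine mem_range_of_exists_le_of_exists_ge hU ⟨-M, ?_⟩ ⟨M, ?_⟩
  · simpa using integral_mono_ae (integrable_const (U (-M))) hint
      (hYM.mono fun ω hω => hmono (abs_le.1 hω).1)
  · simpa using integral_mono_ae hint (integrable_const (U M))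
      (hYM.mono fun ω hω => hmono (abs_le.1 hω).2)

lemma mu_nonpos_iff {γ : ℝ} (hγ : 0 < γ) (hmono : StrictMono U)
    (hrange : ∫ ω, U (γ * X ω) ∂P ∈ range U) :
    mu P U γ X ≤ 0 ↔ U 0 ≤ ∫ ω, U (γ * X ω) ∂P := by
  rw [mu, neg_mul, neg_nonpos, mul_nonneg_iff_of_pos_left (one_div_pos.2 hγ), ← hmono.le_iff_le,
    Function.invFun_eq hrange]

lemma alpha_pos_iff : 0 < alpha P U X ↔ ∃ γ, 0 < γ ∧ mu P U γ X ≤ 0 := by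
  rw [alpha, lt_biSup_iff]
  simp only [mem_ofPred_eq, ENNReal.ofReal_pos]
  exact ⟨fun ⟨γ, hγ, _⟩ => ⟨γ, hγ⟩, fun ⟨γ, hγ⟩ => ⟨γ, hγ, hγ.1⟩⟩

lemma exists_pos_le_integral_comp_mul [IsProbabilityMeasure P] {d : ℝ}
    (hU : HasDerivAt U d 0) (hX : Integrable X P) (hXM : ∀ᵐ ω ∂P, |X ω| ≤ M)
    (hint : ∀ γ, Integrable (fun ω => U (γ * X ω)) P) (hpos : 0 < d * ∫ ω, X ω ∂P) :
    ∃ γ, 0 < γ ∧ U 0 ≤ ∫ ω, U (γ * X ω) ∂P := by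
  have hM : 0 ≤ M := let ⟨_, hω⟩ := hXM.exists; (abs_nonneg _).trans hω
  set ε := (d * ∫ ω, X ω ∂P) / (M + 1)
  have hεM : ε * M ≤ d * ∫ ω, X ω ∂P := by
    rw [div_mul_eq_mul_div, div_le_iff₀ (by positivity)]
    linarith
  obtain ⟨δ, hδ, hlin⟩ := Metric.eventually_nhds_iff.1 (hU.isLittleO.def (by positivity : 0 < ε))
  set γ := δ / (M + 1)
  have hγ : 0 < γ := by positivity
  have hlower : ∀ᵐ ω ∂P, U 0 - γ * (ε * M) + (d * γ) * X ω ≤ U (γ * X ω) := by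
    filter_upwards [hXM] with ω hω
    have hsmall : |γ * X ω| ≤ γ * M := by
      rw [abs_mul, abs_of_pos hγ]
      exact mul_le_mul_of_nonneg_left hω hγ.le
    have hγM : γ * M < δ := by
      rw [div_mul_eq_mul_div, div_lt_iff₀ (by positivity)]
      linarith
    have h := hlin (y := γ * X ω) (by simpa using hsmall.trans_lt hγM)
    simp only [sub_zero, smul_eq_mul, Real.norm_eq_abs] at h
    linarith [(abs_le.1 h).1, mul_le_mul_of_nonneg_left hsmall (by positivity : 0 ≤ ε)]
  refine ⟨γ, hγ, ?_⟩
  calc U 0 ≤ U 0 + γ * (d * ∫ ω, X ω ∂P - ε * M) :=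
        le_add_of_nonneg_right (mul_nonneg hγ.le (sub_nonneg.2 hεM))
    _ = ∫ ω, U 0 - γ * (ε * M) + (d * γ) * X ω ∂P := by
      rw [integral_add (integrable_const _) (hX.const_mul _), integral_const_mul]
      simp only [integral_const, probReal_univ, smul_eq_mul, one_mul]
      ring
    _ ≤ ∫ ω, U (γ * X ω) ∂P :=
      integral_mono_ae ((integrable_const _).add (hX.const_mul _)) (hint γ) hlower

end

theorem alpha_expectation_consistent_general {Ω : Type*} [MeasurableSpace Ω] (P : Measure Ω)
    [IsProbabilityMeasure P] (U : ℝ → ℝ)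
    (hC2 : ContDiff ℝ 2 U) (hconc : ConcaveOn ℝ Set.univ U)
    (hmono : StrictMono U)
    (X : Ω → ℝ) (hX : MemLp X ⊤ P) :
    ((∫ ω, X ω ∂P) < 0 → alpha P U X = 0) ∧
    (0 < (∫ ω, X ω ∂P) → 0 < alpha P U X) := by
  have hU : Continuous U := hC2.continuous
  have hXi : Integrable X P := hX.integrable le_top
  have hXM : ∀ᵐ ω ∂P, |X ω| ≤ lpNorm X ⊤ P := ae_le_lpNorm_exponent_top hX
  have hγXM (γ : ℝ) : ∀ᵐ ω ∂P, |γ * X ω| ≤ |γ| * lpNorm X ⊤ P :=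
    hXM.mono fun ω hω => by rw [abs_mul]; gcongr
  have hγX (γ : ℝ) : AEStronglyMeasurable (fun ω => γ * X ω) P :=
    hX.aestronglyMeasurable.const_mul γ
  have hint (γ : ℝ) : Integrable (fun ω => U (γ * X ω)) P :=
    integrable_comp_of_ae_abs_le hU hmono.monotone (hγX γ) (hγXM γ)
  have hmu {γ : ℝ} (hγ : 0 < γ) : mu P U γ X ≤ 0 ↔ U 0 ≤ ∫ ω, U (γ * X ω) ∂P :=
    mu_nonpos_iff hγ hmono (integral_comp_mem_range hU hmono.monotone (hγX γ) (hγXM γ))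
  refine ⟨fun hneg => ?_, fun hpos => ?_⟩
  · by_contra hne
    obtain ⟨γ, hγ, hle⟩ := alpha_pos_iff.1 (pos_iff_ne_zero.2 hne)
    have hjensen : ∫ ω, U (γ * X ω) ∂P ≤ U (γ * ∫ ω, X ω ∂P) := by
      simpa only [integral_const_mul] using hconc.le_map_integral hU.continuousOn isClosed_univ
        (ae_of_all _ fun _ => mem_univ _) (hXi.const_mul γ) (hint γ)
    linarith [(hmu hγ).1 hle, hmono (mul_neg_of_pos_of_neg hγ hneg)]
  · have hd : HasDerivAt U (deriv U 0) 0 := (hC2.differentiable (by norm_num) 0).hasDerivAt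
    obtain ⟨γ, hγ, hle⟩ := exists_pos_le_integral_comp_mul hd hXi hXM hint
      (mul_pos (hconc.pos_of_hasDerivAt_of_strictMono hmono hd) hpos)
    exact alpha_pos_iff.2 ⟨γ, hγ, (hmu hγ).2 hle⟩

theorem alpha_expectation_consistent {Ω : Type*} [MeasurableSpace Ω] (P : Measure Ω)
    [IsProbabilityMeasure P] (U : ℝ → ℝ)
    (hC2 : ContDiff ℝ 2 U) (hconc : ConcaveOn ℝ Set.univ U)
    (hmono : StrictMono U) (hbdd : BddAbove (Set.range U))
    (hreg : ∀ (X : Ω → ℝ), MemLp X ⊤ P → ∀ γ₁ γ₂ : ℝ, 0 < γ₁ → γ₁ ≤ γ₂ →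
      mu P U γ₁ X ≤ mu P U γ₂ X)
    (X : Ω → ℝ) (hX : MemLp X ⊤ P) :
    ((∫ ω, X ω ∂P) < 0 → alpha P U X = 0) ∧
    (0 < (∫ ω, X ω ∂P) → 0 < alpha P U X) :=
  alpha_expectation_consistent_general P U hC2 hconc hmono X hX
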